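/- Let a = √((3−√5)/2), θ = 0, |φ⟩ = a(|01⟩ + |10⟩) + √(1−2a²)|11⟩ ∈ ℂ² ⊗ ℂ², and let the measurements be Π_{+|0} = |0⟩⟨0|, Π_{−|0} = |1⟩⟨1| on each side and Π_{+|1} = |+⟩⟨+|, Π_{−|1} = I − |+⟩⟨+| on each side, where |+⟩ = (1/√(1−a²))(√(1−2a²)|0⟩ − a|1⟩). Then the quantum behavior p(a,b|x,y) = ⟨φ|(Π_{a|x} ⊗ Π_{b|y})|φ⟩ does not admit any local hidden variable model. -/
import Mathlib


open Matrix Complex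
open scoped Kronecker

noncomputable section

/-- Hardy's amplitude `a = √((3 − √5)/2)`. -/
def aH : ℝ := Real.sqrt ((3 - Real.sqrt 5) / 2)

/-- Hardy's state (with phase `θ = 0`):
`|φ⟩ = a(|01⟩ + |10⟩) + √(1−2a²)|11⟩` in `ℂ² ⊗ ℂ²`, by its coordinates. -/
def phiH : Fin 2 × Fin 2 → ℂ :=
  fun p => !![0, (aH : ℂ); (aH : ℂ), (Real.sqrt (1 - 2 * aH ^ 2) : ℝ)] p.1 p.2

/-- The vector `|+⟩ = (1/√(1−a²))(√(1−2a²)|0⟩ − a|1⟩)`. -/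
def plusH : Fin 2 → ℂ :=
  ![(Real.sqrt (1 - 2 * aH ^ 2) : ℂ) / (Real.sqrt (1 - aH ^ 2) : ℂ),
    -(aH : ℂ) / (Real.sqrt (1 - aH ^ 2) : ℂ)]

/-- The rank-one projection `|+⟩⟨+|`. -/
def projPlusH : Matrix (Fin 2) (Fin 2) ℂ :=
  vecMulVec plusH (star plusH)

/-- Hardy's measurements: input `0` is the computational-basis measurement
`Π₊ = |0⟩⟨0|`, `Π₋ = |1⟩⟨1|`; input `1` is `Π₊ = |+⟩⟨+|`, `Π₋ = 1 − |+⟩⟨+|`.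
Outcome `true` = `+`, `false` = `−`. -/
def measH : Fin 2 → Bool → Matrix (Fin 2) (Fin 2) ℂ :=
  fun x a =>
    if x = 0 then (if a then !![1, 0; 0, 0] else !![0, 0; 0, 1])
    else (if a then projPlusH else 1 - projPlusH)

/-- A behavior `p(a,b|x,y)` admits a local hidden variable model: there are
finitely many hidden variables `λ`, weights `q(λ)`, and local response
probabilities `pA(a|x,λ)`, `pB(b|y,λ)` reproducing `p`. -/
def IsLHV (p : Bool → Bool → Fin 2 → Fin 2 → ℝ) : Prop :=
  ∃ (N : ℕ) (q : Fin N → ℝ)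
    (pA : Bool → Fin 2 → Fin N → ℝ) (pB : Bool → Fin 2 → Fin N → ℝ),
    (∀ l, 0 ≤ q l) ∧ (∑ l, q l) = 1 ∧
    (∀ a x l, 0 ≤ pA a x l ∧ pA a x l ≤ 1) ∧
    (∀ x l, pA true x l + pA false x l = 1) ∧
    (∀ b y l, 0 ≤ pB b y l ∧ pB b y l ≤ 1) ∧
    (∀ y l, pB true y l + pB false y l = 1) ∧
    (∀ a b x y, p a b x y = ∑ l, q l * pA a x l * pB b y l)

section HardyFacts

lemma sqrt5_gt : (2:ℝ) < Real.sqrt 5 := by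
  nlinarith [Real.sq_sqrt (by norm_num : (5:ℝ) ≥ 0), Real.sqrt_nonneg 5]

lemma sqrt5_lt : Real.sqrt 5 < 3 := by
  nlinarith [Real.sq_sqrt (by norm_num : (5:ℝ) ≥ 0), Real.sqrt_nonneg 5]

lemma aH_sq : aH ^ 2 = (3 - Real.sqrt 5) / 2 :=
  Real.sq_sqrt (by nlinarith [sqrt5_lt])

lemma aH_pos : 0 < aH :=
  Real.sqrt_pos.2 (by nlinarith [sqrt5_lt])

lemma hardy_zero1 : (star phiH ⬝ᵥ ((measH 0 true ⊗ₖ measH 0 true) *ᵥ phiH)).re = 0 := by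
  simp [dotProduct, mulVec, Fintype.sum_prod_type, Fin.sum_univ_two, measH, phiH,
    projPlusH, vecMulVec, plusH]

lemma hardy_zero2 : (star phiH ⬝ᵥ ((measH 1 true ⊗ₖ measH 0 false) *ᵥ phiH)).re = 0 := by
  simp [dotProduct, mulVec, Fintype.sum_prod_type, Fin.sum_univ_two, measH, phiH,
    projPlusH, vecMulVec, plusH]
  ring

lemma hardy_zero3 : (star phiH ⬝ᵥ ((measH 0 false ⊗ₖ measH 1 true) *ᵥ phiH)).re = 0 := by
  simp [dotProduct, mulVec, Fintype.sum_prod_type, Fin.sum_univ_two, measH, phiH,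
    projPlusH, vecMulVec, plusH]
  ring

lemma hardy_pos : 0 < (star phiH ⬝ᵥ ((measH 1 true ⊗ₖ measH 1 true) *ᵥ phiH)).re := by
  have h5 := sqrt5_gt
  have h5' := sqrt5_lt
  have ha2 := aH_sq
  have ha := aH_pos
  have hc : 0 < Real.sqrt (1 - 2 * aH ^ 2) := Real.sqrt_pos.2 (by rw [ha2]; nlinarith)
  have hn : 0 < Real.sqrt (1 - aH ^ 2) := Real.sqrt_pos.2 (by nlinarith)
  simp [dotProduct, mulVec, Fintype.sum_prod_type, Fin.sum_univ_two, measH, phiH,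
    projPlusH, vecMulVec, plusH]
  ring_nf
  have e : 1 - aH ^ 2 * 2 = 1 - 2 * aH ^ 2 := by ring
  rw [e]
  exact mul_pos (mul_pos (pow_pos ha 4) (pow_pos hc 2)) (pow_pos (inv_pos.2 hn) 4)

end HardyFacts

/-- **Hardy's quantum behavior is nonlocal:** the behavior obtained from
Hardy's state with Hardy's measurements admits no local hidden variable
model. -/
theorem hardy_behavior_is_nonlocal
    (p : Bool → Bool → Fin 2 → Fin 2 → ℝ)
    (hp : ∀ a b x y,
      p a b x y = (star phiH ⬝ᵥ ((measH x a ⊗ₖ measH y b) *ᵥ phiH)).re) :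
    ¬ IsLHV p := by
  rintro ⟨N, q, pA, pB, hq0, hq1, hA01, hAsum, hB01, hBsum, hrep⟩
  -- the three Hardy zeros and the positive probability
  have z1 : (∑ l, q l * pA true 0 l * pB true 0 l) = 0 := by
    rw [← hrep, hp]; exact hardy_zero1
  have z2 : (∑ l, q l * pA true 1 l * pB false 0 l) = 0 := by
    rw [← hrep, hp]; exact hardy_zero2
  have z3 : (∑ l, q l * pA false 0 l * pB true 1 l) = 0 := by
    rw [← hrep, hp]; exact hardy_zero3
  have pos : 0 < ∑ l, q l * pA true 1 l * pB true 1 l := by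
    rw [← hrep, hp]; exact hardy_pos
  -- termwise nonnegativity
  have tn : ∀ (a b : Bool) (x y : Fin 2) (l : Fin N),
      0 ≤ q l * pA a x l * pB b y l := fun a b x y l =>
    mul_nonneg (mul_nonneg (hq0 l) (hA01 a x l).1) (hB01 b y l).1
  have key : ∀ l ∈ Finset.univ, q l * pA true 1 l * pB true 1 l = 0 := by
    intro l _
    have e1 : q l * pA true 0 l * pB true 0 l = 0 :=
      (Finset.sum_eq_zero_iff_of_nonneg (fun l _ => tn _ _ _ _ l)).1 z1 l (Finset.mem_univ l)
    have e2 : q l * pA true 1 l * pB false 0 l = 0 :=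
      (Finset.sum_eq_zero_iff_of_nonneg (fun l _ => tn _ _ _ _ l)).1 z2 l (Finset.mem_univ l)
    have e3 : q l * pA false 0 l * pB true 1 l = 0 :=
      (Finset.sum_eq_zero_iff_of_nonneg (fun l _ => tn _ _ _ _ l)).1 z3 l (Finset.mem_univ l)
    rcases eq_or_lt_of_le (hq0 l) with hql | hql
    · rw [← hql]; ring
    rcases eq_or_lt_of_le (hA01 true 1 l).1 with hA | hA
    · rw [← hA]; ring
    rcases eq_or_lt_of_le (hB01 true 1 l).1 with hB | hB
    · rw [← hB]; ring
    -- q l > 0, pA+1 > 0, pB+1 > 0 : derive contradiction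
    exfalso
    have hBf0 : pB false 0 l = 0 := by
      by_contra h
      have : 0 < pB false 0 l := lt_of_le_of_ne (hB01 false 0 l).1 (Ne.symm h)
      exact absurd e2 (ne_of_gt (mul_pos (mul_pos hql hA) this))
    have hAf0 : pA false 0 l = 0 := by
      by_contra h
      have : 0 < pA false 0 l := lt_of_le_of_ne (hA01 false 0 l).1 (Ne.symm h)
      exact absurd e3 (ne_of_gt (mul_pos (mul_pos hql this) hB))
    have hBt0 : pB true 0 l = 1 := by have := hBsum 0 l; linarith
    have hAt0 : pA true 0 l = 1 := by have := hAsum 0 l; linarith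
    rw [hAt0, hBt0] at e1
    simp at e1
    linarith
  have : (∑ l, q l * pA true 1 l * pB true 1 l) = 0 := Finset.sum_eq_zero key
  linarith
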